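/- Let p > 0 and q > 0. Let β₁, …, β_{n+2} be pairwise distinct real numbers, none equal to any −αₖ, with ψ(βᵢ) = p + q and ψ′(βᵢ) ≠ 0 for every i, and let γ₁, …, γ_{n+2} be pairwise distinct real numbers, none equal to any −αₖ, with ψ(γⱼ) = p and ψ′(γⱼ) ≠ 0 for every j (so that βᵢ ≠ γⱼ for all i, j). Then for all real numbers a, x with 0 ≤ a ≤ x, ∑_{i=1}^{n+2} e^{βᵢ x}/ψ′(βᵢ) − q ∫₀^a ( ∑_{i=1}^{n+2} e^{βᵢ (x−z)}/ψ′(βᵢ) ) ( ∑_{j=1}^{n+2} e^{γⱼ z}/ψ′(γⱼ) ) dz = q ∑_{i=1}^{n+2} ∑_{j=1}^{n+2} exp(βᵢ x + (γⱼ − βᵢ) a) / ( (βᵢ − γⱼ) ψ′(βᵢ) ψ′(γⱼ) ); that is, the function 𝓦_a^{(p,q)}(x) = W^{(p+q)}(x) − q∫₀^a W^{(p+q)}(x−z)W^{(p)}(z)dz of the hyper-exponential jump-diffusion is given by the stated double sum (the explicit formula for 𝓦_a^{(p,q)} in Section 4.2 of the paper). -/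

import Mathlib

/-!
Clearing denominators, `(ψ(λ) - p) ∏ₖ (λ + αₖ)` is a polynomial of degree `n + 2` with leading
coefficient `σ²/2` vanishing at the `n + 2` roots `γⱼ`, so it equals `σ²/2 ∏ⱼ (λ - γⱼ)`. Partial
fractions of `1 / (ψ - p)` then give `∑ⱼ 1 / ((λ - γⱼ) ψ'(γⱼ)) = 1 / (ψ(λ) - p)`, which is `1 / q`
at `λ = βᵢ`. Expanding the convolution of the two exponential sums, this identity is exactly what
cancels `W^{(p+q)}(x)` against the constant parts of the integrated terms.
-/

open Polynomial Lagrange Finset Real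

section PartialFractions

variable {𝕜 : Type*} [NontriviallyNormedField 𝕜]

theorem hasDerivAt_of_sub_mul_eval_eq {ψ : 𝕜 → 𝕜} {A N : 𝕜[X]} {p κ x : 𝕜}
    (h : ∀ l, A.eval l ≠ 0 → (ψ l - p) * A.eval l = κ * N.eval l)
    (hA : A.eval x ≠ 0) (hN : N.eval x = 0) :
    HasDerivAt ψ (κ * N.derivative.eval x / A.eval x) x := by
  have hψ : ψ =ᶠ[nhds x] fun l => p + κ * (N.eval l / A.eval l) := by
    filter_upwards [A.continuous.continuousAt.eventually_ne hA] with l hl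
    rw [mul_div_assoc', eq_add_of_sub_eq' (eq_div_of_mul_eq hl (h l hl))]
  have hquot := (((N.hasDerivAt x).div (A.hasDerivAt x) hA).const_mul κ).const_add p
  rw [hN, zero_mul, sub_zero, sq, mul_div_mul_right _ _ hA, mul_div_assoc'] at hquot
  exact hquot.congr_of_eventuallyEq hψ

variable {ι : Type*} [DecidableEq ι] {s : Finset ι} {v : ι → 𝕜}

/-- Partial fractions of `1 / (ψ - p) = A / (κ · nodal s v)`: its residue at the root `v i` is
`1 / ψ'(v i)`. -/
theorem sum_inv_sub_mul_deriv_eq_inv_sub {ψ : 𝕜 → 𝕜} {A : 𝕜[X]} {p κ x : 𝕜}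
    (hv : Set.InjOn v s) (hdeg : A.degree < #s)
    (h : ∀ l, A.eval l ≠ 0 → (ψ l - p) * A.eval l = κ * (nodal s v).eval l)
    (hAv : ∀ i ∈ s, A.eval (v i) ≠ 0) (hAx : A.eval x ≠ 0) (hx : ∀ i ∈ s, x ≠ v i) :
    ∑ i ∈ s, ((x - v i) * deriv ψ (v i))⁻¹ = (ψ x - p)⁻¹ := by
  have hderiv : ∀ i ∈ s, deriv ψ (v i) = κ / (nodalWeight s v i * A.eval (v i)) := by
    intro i hi
    rw [(hasDerivAt_of_sub_mul_eval_eq h (hAv i hi) (eval_nodal_at_node hi)).deriv,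
      nodalWeight_eq_eval_derivative_nodal hi, div_mul_eq_div_div, div_inv_eq_mul]
  have hinterp := eval_interpolate_not_at_node (fun i => A.eval (v i)) hx
  rw [← eq_interpolate hv hdeg] at hinterp
  have hψx : ψ x - p = κ * (nodal s v).eval x / A.eval x := eq_div_of_mul_eq hAx (h x hAx)
  rw [hψx, inv_div, hinterp, mul_comm κ, mul_div_mul_left _ _ (eval_nodal_not_at_node hx),
    sum_div]
  refine sum_congr rfl fun i hi => ?_
  rw [hderiv i hi, mul_inv, inv_div]
  ring

end PartialFractions

section Hyperexponential

variable {ι : Type*} [Fintype ι] [DecidableEq ι] (α w : ι → ℝ) (c κ η p : ℝ)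

/-- `(ψ(λ) - p) ∏ₖ (λ + αₖ)` as a polynomial in `λ`, where `nodal univ (-α) = ∏ₖ (X + αₖ)`. -/
noncomputable def hyperexpNumerator : ℝ[X] :=
  (C κ * X ^ 2 + C c * X - C (η + p)) * nodal univ (-α)
    + C η * ∑ i, C (w i * α i) * nodal (univ.erase i) (-α)

theorem eval_hyperexpNumerator {l : ℝ} (hl : (nodal univ (-α)).eval l ≠ 0) :
    (hyperexpNumerator α w c κ η p).eval l
      = (c * l + κ * l ^ 2 + η * ((∑ i, w i * α i / (l + α i)) - 1) - p)
        * (nodal univ (-α)).eval l := by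
  have hsplit : ∀ i, (nodal univ (-α)).eval l = (l + α i) * (nodal (univ.erase i) (-α)).eval l :=
    fun i => by
      rw [nodal_eq_mul_nodal_erase (mem_univ i), eval_mul, eval_sub, eval_X, eval_C, Pi.neg_apply,
        sub_neg_eq_add]
  have hpole : ∀ i, l + α i ≠ 0 := fun i h => hl (by rw [hsplit i, h, zero_mul])
  have hsum : (∑ i, w i * α i / (l + α i)) * (nodal univ (-α)).eval l
      = ∑ i, w i * α i * (nodal (univ.erase i) (-α)).eval l := by
    rw [sum_mul]
    refine sum_congr rfl fun i _ => ?_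
    rw [hsplit i, div_mul_eq_mul_div, mul_div_assoc, mul_div_cancel_left₀ _ (hpole i)]
  simp only [hyperexpNumerator, eval_add, eval_mul, eval_sub, eval_C, eval_X, eval_pow,
    eval_finsetSum]
  linear_combination (-η) * hsum

theorem degree_hyperexpNumerator_and_leadingCoeff (hκ : κ ≠ 0) :
    (hyperexpNumerator α w c κ η p).degree = (Fintype.card ι + 2 : ℕ)
      ∧ (hyperexpNumerator α w c κ η p).leadingCoeff = κ := by
  have hquad : C κ * X ^ 2 + C c * X - C (η + p) = C κ * X ^ 2 + C c * X + C (-(η + p)) := by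
    rw [C_neg, sub_eq_add_neg]
  have hmain : ((C κ * X ^ 2 + C c * X - C (η + p)) * nodal univ (-α)).degree
      = ((Fintype.card ι + 2 : ℕ) : WithBot ℕ) := by
    rw [hquad, degree_mul, degree_quadratic hκ, degree_nodal, card_univ, add_comm]
    rfl
  have htail_le : (C η * ∑ i, C (w i * α i) * nodal (univ.erase i) (-α)).natDegree
      ≤ Fintype.card ι :=
    (natDegree_C_mul_le _ _).trans <| natDegree_sum_le_of_forall_le _ _ fun i _ =>
      (natDegree_C_mul_le _ _).trans <| natDegree_nodal.trans_le <| card_erase_le.trans card_univ.le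
  have htail : (C η * ∑ i, C (w i * α i) * nodal (univ.erase i) (-α)).degree
      < ((Fintype.card ι + 2 : ℕ) : WithBot ℕ) :=
    (degree_le_of_natDegree_le htail_le).trans_lt <| by
      exact_mod_cast Nat.lt_add_of_pos_right two_pos
  rw [← hmain] at htail
  refine ⟨(degree_add_eq_left_of_degree_lt htail).trans hmain, ?_⟩
  rw [hyperexpNumerator, leadingCoeff_add_of_degree_lt' htail, leadingCoeff_mul, hquad,
    leadingCoeff_quadratic hκ, nodal_monic.leadingCoeff, mul_one]

theorem sub_mul_eval_nodal_eq_of_eq_at_roots {ψ : ℝ → ℝ}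
    (hψ : ∀ l, ψ l = c * l + κ * l ^ 2 + η * ((∑ i, w i * α i / (l + α i)) - 1)) (hκ : κ ≠ 0)
    {J : Type*} [Fintype J] {γ : J → ℝ} (hγ : Function.Injective γ)
    (hJ : Fintype.card J = Fintype.card ι + 2)
    (hγ_pole : ∀ j, (nodal univ (-α)).eval (γ j) ≠ 0) (hγ_root : ∀ j, ψ (γ j) = p) (l : ℝ)
    (hl : (nodal univ (-α)).eval l ≠ 0) :
    (ψ l - p) * (nodal univ (-α)).eval l = κ * (nodal univ γ).eval l := by
  obtain ⟨hdeg, hlead⟩ := degree_hyperexpNumerator_and_leadingCoeff α w c κ η p hκ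
  have hnum : hyperexpNumerator α w c κ η p = C κ * nodal univ γ := by
    refine eq_of_degree_le_of_eval_index_eq univ hγ.injOn ?_ ?_ ?_ fun j _ => ?_
    · rw [hdeg, card_univ, hJ]
    · rw [hdeg, degree_C_mul hκ, degree_nodal, card_univ, hJ]
    · rw [hlead, leadingCoeff_C_mul_of_isUnit hκ.isUnit, nodal_monic.leadingCoeff, mul_one]
    · rw [eval_hyperexpNumerator _ _ _ _ _ _ (hγ_pole j), ← hψ, hγ_root, sub_self, zero_mul,
        eval_mul, eval_nodal_at_node (mem_univ j), mul_zero]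
  rw [hψ, ← eval_hyperexpNumerator _ _ _ _ _ _ hl, hnum, eval_mul, eval_C]

end Hyperexponential

theorem integral_exp_mul_of_ne_zero {c : ℝ} (hc : c ≠ 0) (a : ℝ) :
    ∫ z in (0:ℝ)..a, exp (c * z) = (exp (c * a) - 1) / c := by
  rw [intervalIntegral.integral_comp_mul_left (fun z => exp z) hc, integral_exp, mul_zero, exp_zero,
    smul_eq_mul, inv_mul_eq_div]

section ExpSums

variable {ι ι' : Type*} [Fintype ι] [Fintype ι'] (b d : ι → ℝ) (g e : ι' → ℝ)

theorem integral_sum_exp_mul_sum_exp (hbg : ∀ i j, b i ≠ g j) (a x : ℝ) :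
    ∫ z in (0:ℝ)..a, (∑ i, exp (b i * (x - z)) / d i) * (∑ j, exp (g j * z) / e j)
      = ∑ i, ∑ j, exp (b i * x) / (d i * e j) * ((exp ((g j - b i) * a) - 1) / (g j - b i)) := by
  have hprod : ∀ z, (∑ i, exp (b i * (x - z)) / d i) * (∑ j, exp (g j * z) / e j)
      = ∑ i, ∑ j, exp (b i * x) / (d i * e j) * exp ((g j - b i) * z) := by
    intro z
    rw [sum_mul_sum]
    refine sum_congr rfl fun i _ => sum_congr rfl fun j _ => ?_
    rw [div_mul_div_comm, div_mul_eq_mul_div, ← exp_add, ← exp_add]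
    congr 2
    ring
  simp_rw [hprod]
  rw [intervalIntegral.integral_finsetSum fun i _ =>
    Continuous.intervalIntegrable (by fun_prop) _ _]
  refine sum_congr rfl fun i _ => ?_
  rw [intervalIntegral.integral_finsetSum fun j _ =>
    Continuous.intervalIntegrable (by fun_prop) _ _]
  refine sum_congr rfl fun j _ => ?_
  rw [intervalIntegral.integral_const_mul,
    integral_exp_mul_of_ne_zero (sub_ne_zero.2 (hbg i j).symm)]

theorem sum_exp_sub_mul_integral_sum_exp_mul_sum_exp (q : ℝ) (hbg : ∀ i j, b i ≠ g j)
    (hres : ∀ i, q * ∑ j, ((b i - g j) * e j)⁻¹ = 1) (a x : ℝ) :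
    (∑ i, exp (b i * x) / d i)
        - q * ∫ z in (0:ℝ)..a, (∑ i, exp (b i * (x - z)) / d i) * (∑ j, exp (g j * z) / e j)
      = q * ∑ i, ∑ j, exp (b i * x + (g j - b i) * a) / ((b i - g j) * d i * e j) := by
  have hrow : ∀ i, exp (b i * x) / d i
      - q * ∑ j, exp (b i * x) / (d i * e j) * ((exp ((g j - b i) * a) - 1) / (g j - b i))
      = q * ∑ j, exp (b i * x + (g j - b i) * a) / ((b i - g j) * d i * e j) := by
    intro i
    have hfirst : exp (b i * x) / d i = q * ∑ j, exp (b i * x) / d i * ((b i - g j) * e j)⁻¹ := by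
      rw [← mul_sum, mul_left_comm, hres i, mul_one]
    rw [hfirst, ← mul_sub, ← sum_sub_distrib]
    congr 1
    refine sum_congr rfl fun j _ => ?_
    rw [exp_add, ← neg_sub (b i)]
    simp only [div_eq_mul_inv, mul_inv, inv_neg]
    ring
  rw [integral_sum_exp_mul_sum_exp b d g e hbg, mul_sum, ← sum_sub_distrib, mul_sum]
  exact sum_congr rfl fun i _ => hrow i

end ExpSums

theorem hyperexp_W_script_general
    (n : ℕ)
    (α w : Fin n → ℝ)
    (η : ℝ) (c σ : ℝ) (hσ : 0 < σ)
    (ψ : ℝ → ℝ)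
    (hψ : ∀ l : ℝ, ψ l
      = c * l + σ ^ 2 / 2 * l ^ 2 + η * ((∑ i, w i * α i / (l + α i)) - 1))
    (p q : ℝ) (hq : 0 < q)
    (β : Fin (n + 2) → ℝ)
    (hβ_pole : ∀ i k, β i ≠ -α k)
    (hβ_root : ∀ i, ψ (β i) = p + q)
    (γ : Fin (n + 2) → ℝ) (hγ_inj : Function.Injective γ)
    (hγ_pole : ∀ j k, γ j ≠ -α k)
    (hγ_root : ∀ j, ψ (γ j) = p) :
    ∀ a x : ℝ, 0 ≤ a → a ≤ x →
      (∑ i, Real.exp (β i * x) / deriv ψ (β i))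
        - q * ∫ z in (0:ℝ)..a,
            (∑ i, Real.exp (β i * (x - z)) / deriv ψ (β i)) *
            (∑ j, Real.exp (γ j * z) / deriv ψ (γ j))
        = q * ∑ i, ∑ j,
            Real.exp (β i * x + (γ j - β i) * a)
              / ((β i - γ j) * deriv ψ (β i) * deriv ψ (γ j)) := by
  intro a x _ _
  have hA : ∀ l, (∀ k, l ≠ -α k) → (nodal univ (-α)).eval l ≠ 0 :=
    fun l hl => eval_nodal_not_at_node fun k _ => hl k
  have hrat := sub_mul_eval_nodal_eq_of_eq_at_roots α w c (σ ^ 2 / 2) η p hψ (by positivity)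
    hγ_inj (by simp) (fun j => hA _ (hγ_pole j)) hγ_root
  have hβγ : ∀ i j, β i ≠ γ j := fun i j h => by
    have := hβ_root i
    rw [h, hγ_root j] at this
    linarith
  refine sum_exp_sub_mul_integral_sum_exp_mul_sum_exp β _ γ _ q hβγ (fun i => ?_) a x
  have hdeg : (nodal univ (-α)).degree < #(univ : Finset (Fin (n + 2))) := by
    rw [degree_nodal, card_univ, card_univ, Fintype.card_fin, Fintype.card_fin]
    exact_mod_cast Nat.lt_add_of_pos_right two_pos
  rw [sum_inv_sub_mul_deriv_eq_inv_sub hγ_inj.injOn hdeg hrat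
    (fun j _ => hA _ (hγ_pole j)) (hA _ (hβ_pole i)) (fun j _ => hβγ i j), hβ_root i,
    add_sub_cancel_left, mul_inv_cancel₀ hq.ne']

/-- The explicit formula for 𝓦_a^{(p,q)} in Section 4.2 of the paper:
W^{(p+q)}(x) − q∫₀ᵃ W^{(p+q)}(x−z)W^{(p)}(z)dz
  = q ∑ᵢ ∑ⱼ e^{βᵢx + (γⱼ−βᵢ)a}/((βᵢ − γⱼ)ψ′(βᵢ)ψ′(γⱼ)) for 0 ≤ a ≤ x,
where β (resp. γ) enumerates the roots of ψ = p + q (resp. ψ = p). -/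
theorem hyperexp_W_script
    (n : ℕ) (hn : 1 ≤ n)
    (α w : Fin n → ℝ)
    (hα_pos : ∀ i, 0 < α i) (hα_mono : StrictMono α)
    (hw_pos : ∀ i, 0 < w i) (hw_sum : ∑ i, w i = 1)
    (η : ℝ) (hη : 0 < η) (c σ : ℝ) (hσ : 0 < σ)
    (ψ : ℝ → ℝ)
    (hψ : ∀ l : ℝ, ψ l
      = c * l + σ ^ 2 / 2 * l ^ 2 + η * ((∑ i, w i * α i / (l + α i)) - 1))
    (p q : ℝ) (hp : 0 < p) (hq : 0 < q)
    (β : Fin (n + 2) → ℝ) (hβ_inj : Function.Injective β)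
    (hβ_pole : ∀ i k, β i ≠ -α k)
    (hβ_root : ∀ i, ψ (β i) = p + q)
    (hβ_simple : ∀ i, deriv ψ (β i) ≠ 0)
    (γ : Fin (n + 2) → ℝ) (hγ_inj : Function.Injective γ)
    (hγ_pole : ∀ j k, γ j ≠ -α k)
    (hγ_root : ∀ j, ψ (γ j) = p)
    (hγ_simple : ∀ j, deriv ψ (γ j) ≠ 0) :
    ∀ a x : ℝ, 0 ≤ a → a ≤ x →
      (∑ i, Real.exp (β i * x) / deriv ψ (β i))
        - q * ∫ z in (0:ℝ)..a,
            (∑ i, Real.exp (β i * (x - z)) / deriv ψ (β i)) *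
            (∑ j, Real.exp (γ j * z) / deriv ψ (γ j))
        = q * ∑ i, ∑ j,
            Real.exp (β i * x + (γ j - β i) * a)
              / ((β i - γ j) * deriv ψ (β i) * deriv ψ (γ j)) :=
  hyperexp_W_script_general n α w η c σ hσ ψ hψ p q hq β hβ_pole hβ_root γ hγ_inj hγ_pole hγ_root
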